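/- Suppose sequences (s_{k,g}) and (b_l) of rationals satisfy b_0 = 1, b_1 = 2, s_{0,g} = 1, s_{1,g} = 2g−2 for g ≥ 1, s_{k,2k} = s_{k,2k-1} = 0 for k ≥ 2, and s_{k,g} = Σ_{l=0}^{k} b_l s_{k-l,g-1} for all k ≥ 0, g ≥ 2. Then s_{k,g} = 2^k · binom(g − 2k + 1, k) for all k ≥ 0, g ≥ 1. -/

import Mathlib

/-- Generalized binomial coefficient `n(n-1)⋯(n-k+1)/k!` as a rational number. -/
noncomputable def gbinom (n : ℤ) (k : ℕ) : ℚ :=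
  (∏ i ∈ Finset.range k, ((n : ℚ) - i)) / (Nat.factorial k)

/-- `s'_{k,g} = 2^k · binom(g - 2k + 1, k)`. -/
noncomputable def sPrime (k : ℕ) (g : ℤ) : ℚ :=
  2 ^ k * gbinom (g - 2 * k + 1) k

lemma gbinom_zero (n : ℤ) : gbinom n 0 = 1 := by simp [gbinom]

lemma gbinom_zero_left (k : ℕ) (hk : 1 ≤ k) : gbinom 0 k = 0 := by
  unfold gbinom
  rw [Finset.prod_eq_zero (Finset.mem_range.2 hk)] <;> simp

lemma gbinom_pascal (n : ℤ) (k : ℕ) :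
    gbinom n (k+1) = gbinom (n-1) (k+1) + gbinom (n-1) k := by
  have h1 : ∏ i ∈ Finset.range (k+1), ((n:ℚ) - i)
      = (∏ i ∈ Finset.range k, (((n-1:ℤ):ℚ) - i)) * n := by
    rw [Finset.prod_range_succ']
    congr 1
    · refine Finset.prod_congr rfl fun i _ => ?_
      push_cast; ring
    · simp
  have h2 : ∏ i ∈ Finset.range (k+1), (((n-1:ℤ):ℚ) - i)
      = (∏ i ∈ Finset.range k, (((n-1:ℤ):ℚ) - i)) * (((n-1:ℤ):ℚ) - k) :=
    Finset.prod_range_succ _ _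
  unfold gbinom
  rw [h1, h2, Nat.factorial_succ]
  have hf : (Nat.factorial k : ℚ) ≠ 0 := by positivity
  have hk1 : ((k+1 : ℕ) : ℚ) ≠ 0 := by positivity
  field_simp
  push_cast
  ring

lemma sPrime_zero (g : ℤ) : sPrime 0 g = 1 := by simp [sPrime, gbinom]

lemma sPrime_boundary (k : ℕ) (hk : 1 ≤ k) : sPrime k (2 * k - 1) = 0 := by
  have : (2 * (k:ℤ) - 1) - 2 * k + 1 = 0 := by ring
  rw [sPrime, this, gbinom_zero_left k hk, mul_zero]

lemma sPrime_pascal (k : ℕ) (g : ℤ) :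
    sPrime (k+1) g = sPrime (k+1) (g-1) + 2 * sPrime k (g-3) := by
  unfold sPrime
  have h := gbinom_pascal (g - 2 * (k+1) + 1) k
  have e1 : g - 2 * ((k:ℤ)+1) + 1 - 1 = (g-1) - 2 * ((k:ℤ)+1) + 1 := by ring
  have e2 : g - 2 * ((k:ℤ)+1) + 1 - 1 = (g-3) - 2 * (k:ℤ) + 1 := by ring
  push_cast at h ⊢
  rw [h, e1]
  rw [e1] at e2
  rw [e2]
  ring

lemma int_const {f : ℤ → ℚ} (h : ∀ g : ℤ, f g = f (g-1)) (a c : ℤ) : f a = f c := by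
  have key : ∀ g : ℤ, f g = f 0 := by
    intro g
    induction g using Int.induction_on with
    | zero => rfl
    | succ i ih =>
        have hh := h ((i:ℤ)+1)
        have e : (i:ℤ) + 1 - 1 = i := by ring
        rw [e] at hh
        exact hh.trans ih
    | pred i ih =>
        have hh := h (-(i:ℤ))
        show f (-(i:ℤ) - 1) = f 0
        rw [← hh]; exact ih
  exact (key a).trans (key c).symm

/-- Any pair of sequences satisfying the boundary conditions, vanishings and the
convolution recursion is given by `s_{k,g} = 2^k · binom(g - 2k + 1, k)`. -/
theorem sequences_eq_sPrime
    (s : ℕ → ℤ → ℚ) (b : ℕ → ℚ)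
    (hb0 : b 0 = 1) (hb1 : b 1 = 2)
    (hs0 : ∀ g : ℤ, 1 ≤ g → s 0 g = 1)
    (hs1 : ∀ g : ℤ, 1 ≤ g → s 1 g = 2 * g - 2)
    (hsv : ∀ k : ℕ, 2 ≤ k → s k (2 * k) = 0 ∧ s k (2 * k - 1) = 0)
    (hsr : ∀ k : ℕ, ∀ g : ℤ, 2 ≤ g →
      s k g = ∑ l ∈ Finset.range (k + 1), b l * s (k - l) (g - 1)) :
    ∀ k : ℕ, ∀ g : ℤ, 1 ≤ g → s k g = sPrime k g := by
  suffices H : ∀ k : ℕ,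
      (∀ g : ℤ, 1 ≤ g → s k g = sPrime k g) ∧
      (∀ j : ℕ, k = j + 1 → ∀ g : ℤ,
        (∑ l ∈ Finset.range (j+1), b (l+1) * sPrime (j-l) g) = 2 * sPrime j (g-2)) by
    exact fun k g hg => (H k).1 g hg
  intro k
  induction k using Nat.strong_induction_on with
  | _ k IH =>
    match k with
    | 0 =>
      refine ⟨fun g hg => ?_, fun j hj => by omega⟩
      rw [hs0 g hg, sPrime_zero]
    | 1 =>
      constructor
      · intro g hg
        rw [hs1 g hg]
        unfold sPrime gbinom
        rw [Finset.prod_range_one]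
        norm_num [Nat.factorial]
        push_cast
        ring
      · rintro j hj g
        obtain rfl : j = 0 := by omega
        rw [Finset.sum_range_one, hb1, sPrime_zero, sPrime_zero]
    | (m+2) =>
      have IHs : ∀ j, j < m + 2 → ∀ g : ℤ, 1 ≤ g → s j g = sPrime j g :=
        fun j hj => (IH j hj).1
      have IHQ : ∀ g : ℤ,
          (∑ l ∈ Finset.range (m+1), b (l+1) * sPrime (m-l) g) = 2 * sPrime m (g-2) :=
        (IH (m+1) (by omega)).2 m rfl
      -- rewritten recursion
      have hrec : ∀ g : ℤ, 2 ≤ g →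
          s (m+2) g = s (m+2) (g-1)
            + ∑ l ∈ Finset.range (m+2), b (l+1) * s (m+1-l) (g-1) := by
        intro g hg
        rw [hsr (m+2) g hg, Finset.sum_range_succ', hb0]
        have e : ∀ l : ℕ, m+2-(l+1) = m+1-l := fun l => by omega
        simp only [e, Nat.sub_zero, one_mul]
        ring
      -- the sum of the convolution identity splits off its constant last term
      have hS : ∀ y : ℤ, (∑ l ∈ Finset.range (m+2), b (l+1) * sPrime (m+1-l) y)
          = (∑ l ∈ Finset.range (m+1), b (l+1) * sPrime (m+1-l) y) + b (m+2) := by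
        intro y
        rw [Finset.sum_range_succ, Nat.sub_self, sPrime_zero, mul_one]
      -- anchor: the convolution sum vanishes at g = 2(m+2)-1
      have hb_anchor :
          (∑ l ∈ Finset.range (m+2), b (l+1) * sPrime (m+1-l) (2*((m+2:ℕ):ℤ) - 1)) = 0 := by
        have hv := hsv (m+2) (by omega)
        have hr := hrec (2*((m+2:ℕ):ℤ)) (by omega)
        have hsum : (∑ l ∈ Finset.range (m+2), b (l+1) * s (m+1-l) (2*((m+2:ℕ):ℤ) - 1))
            = ∑ l ∈ Finset.range (m+2), b (l+1) * sPrime (m+1-l) (2*((m+2:ℕ):ℤ) - 1) :=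
          Finset.sum_congr rfl fun l hl => by
            rw [IHs (m+1-l) (by omega) _ (by omega)]
        rw [hv.1, hv.2, hsum] at hr
        linarith
      -- the convolution identity for sPrime, with the given b
      have Qk : ∀ g : ℤ,
          (∑ l ∈ Finset.range (m+2), b (l+1) * sPrime (m+1-l) g)
            = 2 * sPrime (m+1) (g-2) := by
        have hstep : ∀ x : ℤ,
            (∑ l ∈ Finset.range (m+2), b (l+1) * sPrime (m+1-l) x) - 2 * sPrime (m+1) (x-2)
            = (∑ l ∈ Finset.range (m+2), b (l+1) * sPrime (m+1-l) (x-1))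
                - 2 * sPrime (m+1) ((x-1)-2) := by
          intro x
          have hA : (∑ l ∈ Finset.range (m+1), b (l+1) * sPrime (m+1-l) x)
              = (∑ l ∈ Finset.range (m+1), b (l+1) * sPrime (m+1-l) (x-1))
                + 2 * (∑ l ∈ Finset.range (m+1), b (l+1) * sPrime (m-l) (x-3)) := by
            rw [Finset.mul_sum, ← Finset.sum_add_distrib]
            refine Finset.sum_congr rfl fun l hl => ?_
            have hl' := Finset.mem_range.1 hl
            have e : m+1-l = (m-l)+1 := by omega
            rw [e, sPrime_pascal (m-l) x]
            ring
          have hQ3 := IHQ (x-3)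
          have e2 : x-3-2 = x-2-3 := by ring
          rw [e2] at hQ3
          have hp : sPrime (m+1+1) (x-2) = sPrime (m+1+1) ((x-2)-1) + 2 * sPrime (m+1) ((x-2)-3) :=
            sPrime_pascal (m+1) (x-2)
          have e3 : x-2-1 = x-1-2 := by ring
          rw [e3] at hp
          have hp2 : sPrime (m+1) (x-2) = sPrime (m+1) (x-1-2) + 2 * sPrime m (x-2-3) := by
            have hq : sPrime (m+1) (x-2) = sPrime (m+1) ((x-2)-1) + 2 * sPrime m ((x-2)-3) :=
              sPrime_pascal m (x-2)
            rw [e3] at hq; exact hq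
          rw [hS x, hS (x-1), hA, hQ3, hp2]
          ring
        have hzero2 : sPrime (m+1) ((2*((m+2:ℕ):ℤ) - 1) - 2) = 0 := by
          have h := sPrime_boundary (m+1) (by omega)
          have e : (2*((m+2:ℕ):ℤ) - 1) - 2 = 2*((m+1:ℕ):ℤ) - 1 := by push_cast; ring
          rw [e]; exact h
        intro g
        have hk : (∑ l ∈ Finset.range (m+2), b (l+1) * sPrime (m+1-l) g)
              - 2 * sPrime (m+1) (g-2)
            = (∑ l ∈ Finset.range (m+2), b (l+1) * sPrime (m+1-l) (2*((m+2:ℕ):ℤ) - 1))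
              - 2 * sPrime (m+1) ((2*((m+2:ℕ):ℤ) - 1) - 2) :=
          int_const (f := fun y : ℤ =>
            (∑ l ∈ Finset.range (m+2), b (l+1) * sPrime (m+1-l) y)
              - 2 * sPrime (m+1) (y-2)) hstep g _
        rw [hb_anchor, hzero2] at hk
        linarith
      -- the value statement for k = m+2
      have Pk : ∀ g : ℤ, 1 ≤ g → s (m+2) g = sPrime (m+2) g := by
        have hEstep : ∀ x : ℤ, 2 ≤ x →
            s (m+2) x - sPrime (m+2) x = s (m+2) (x-1) - sPrime (m+2) (x-1) := by
          intro x hx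
          have hr := hrec x hx
          have hsum : (∑ l ∈ Finset.range (m+2), b (l+1) * s (m+1-l) (x-1))
              = ∑ l ∈ Finset.range (m+2), b (l+1) * sPrime (m+1-l) (x-1) :=
            Finset.sum_congr rfl fun l hl => by
              rw [IHs (m+1-l) (by omega) (x-1) (by omega)]
          have hq := Qk (x-1)
          have e : x-1-2 = x-3 := by ring
          rw [e] at hq
          have hp : sPrime (m+2) x = sPrime (m+2) (x-1) + 2 * sPrime (m+1) (x-3) :=
            sPrime_pascal (m+1) x
          rw [hr, hsum, hq, hp]
          ring
        have hup : ∀ n : ℕ,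
            s (m+2) (1 + (n:ℤ)) - sPrime (m+2) (1 + (n:ℤ)) = s (m+2) 1 - sPrime (m+2) 1 := by
          intro n
          induction n with
          | zero => norm_num
          | succ n ih =>
            have h := hEstep (1 + ((n+1:ℕ):ℤ)) (by push_cast; omega)
            have e : (1 + ((n+1:ℕ):ℤ)) - 1 = 1 + (n:ℤ) := by push_cast; ring
            rw [e] at h
            rw [h, ih]
        have hanchor : s (m+2) (2*((m+2:ℕ):ℤ) - 1) - sPrime (m+2) (2*((m+2:ℕ):ℤ) - 1) = 0 := by
          rw [(hsv (m+2) (by omega)).2, sPrime_boundary (m+2) (by omega)]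
          norm_num
        have h1 : s (m+2) 1 - sPrime (m+2) 1 = 0 := by
          have h := hup (2*m + 2)
          have e : (1 : ℤ) + ((2*m+2:ℕ):ℤ) = 2*((m+2:ℕ):ℤ) - 1 := by push_cast; ring
          rw [e, hanchor] at h
          linarith
        intro g hg
        have h := hup (g-1).toNat
        have e : (1 : ℤ) + (((g-1).toNat:ℕ):ℤ) = g := by
          rw [Int.toNat_of_nonneg (by omega)]; ring
        rw [e, h1] at h
        linarith
      refine ⟨Pk, ?_⟩
      rintro j hj g
      obtain rfl : j = m+1 := by omega
      exact Qk g
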